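/- For a horizontal strip λ/μ with |λ| = n, the statistic eig(λ/μ) satisfies eig(λ/μ) ≤ n², with equality if and only if λ = (n) is the one-row partition and μ is the empty partition. -/

import Mathlib

/-!
Write `k = |μ|` and `s = λ/μ`. The cells of the horizontal strip `s` lie in `n - k` distinct
columns, all smaller than `n`, so their column indices add up to at most the sum of the `n - k`
largest elements of `{0, …, n-1}`. Plugging this into `eig` gives
`eig(λ/μ) + k² + (sum of the row indices of s) ≤ n²`.
Equality therefore forces `k = 0` and every cell of `λ` into the first row.
-/

/-- The diagonal index of a set of cells `(i, j)` (0-indexed rows and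
columns, so the cell in row `i`, column `j` has diagonal index `j - i`,
agreeing with the 1-indexed convention). -/
def diagS (s : Finset (ℕ × ℕ)) : ℤ := ∑ c ∈ s, ((c.2 : ℤ) - (c.1 : ℤ))

/-- The skew diagram `λ/μ` is a horizontal strip: no two cells in the same column. -/
def IsHorizontalStrip (l m : YoungDiagram) : Prop :=
  ∀ c1 ∈ l.cells \ m.cells, ∀ c2 ∈ l.cells \ m.cells, c1.2 = c2.2 → c1 = c2

/-- The statistic `eig(λ/μ) = C(|λ|+1,2) − C(|μ|+1,2) + diag(λ/μ)`. -/
def eigS (l m : YoungDiagram) : ℤ :=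
  ((l.card + 1).choose 2 : ℤ) - ((m.card + 1).choose 2 : ℤ) + diagS (l.cells \ m.cells)

/-- The one-row Young diagram with `n` boxes. -/
def rowDiagram (n : ℕ) : YoungDiagram :=
  YoungDiagram.ofRowLens [n] (List.sortedGE_iff_pairwise.mpr (List.pairwise_singleton _ n))

/-- The one-column Young diagram `1^n`. -/
def colDiagram (n : ℕ) : YoungDiagram :=
  YoungDiagram.ofRowLens (List.replicate n 1) (by
    induction n with
    | zero => simp [List.sortedGE_iff_pairwise]
    | succ k ih =>
      rw [List.replicate_succ, List.sortedGE_iff_pairwise, List.pairwise_cons]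
      exact ⟨fun b hb => by simp [List.eq_of_mem_replicate hb], List.sortedGE_iff_pairwise.mp ih⟩)

open Finset

lemma two_mul_sum_le_of_subset_range {n : ℕ} {T : Finset ℕ} (hT : T ⊆ range n) :
    2 * ∑ j ∈ T, (j : ℤ) ≤ #T * (2 * n - #T - 1) := by
  induction n generalizing T with
  | zero => simp [subset_empty.mp hT]
  | succ c ih =>
    have h := ih (subset_insert_iff.mp (range_add_one ▸ hT))
    by_cases hc : c ∈ T
    · rw [← add_sum_erase T _ hc, ← card_erase_add_one hc]
      push_cast
      linarith
    · rw [erase_eq_of_notMem hc] at h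
      push_cast
      nlinarith [Int.natCast_nonneg #T]

lemma two_mul_choose_two_succ (a : ℕ) : 2 * ((a + 1).choose 2 : ℤ) = a * (a + 1) := by
  have h := Nat.add_one_mul_choose_eq a 1
  rw [Nat.choose_one_right] at h
  push_cast [mul_comm] at h ⊢
  linarith

lemma choose_two_succ_add_sum_range (n : ℕ) : (n + 1).choose 2 + ∑ j ∈ range n, j = n ^ 2 := by
  induction n with
  | zero => rfl
  | succ n ih =>
    rw [Nat.choose_succ_succ', sum_range_succ, Nat.choose_one_right]
    linarith

lemma YoungDiagram.snd_lt_card {μ : YoungDiagram} {c : ℕ × ℕ} (hc : c ∈ μ.cells) :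
    c.2 < μ.card :=
  calc c.2 < μ.rowLen c.1 := mem_iff_lt_rowLen.mp (by simpa using hc)
    _ = #(μ.row c.1) := μ.rowLen_eq_card
    _ ≤ μ.card := card_le_card (filter_subset _ _)

lemma mem_rowDiagram {n : ℕ} {c : ℕ × ℕ} : c ∈ (rowDiagram n).cells ↔ c.1 = 0 ∧ c.2 < n := by
  rw [rowDiagram, YoungDiagram.mem_cells, YoungDiagram.mem_ofRowLens]
  constructor
  · rintro ⟨h1, h2⟩
    simp only [List.length_singleton, Nat.lt_one_iff] at h1
    simp_all
  · rintro ⟨h1, h2⟩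
    simp [h1, h2]

lemma rowDiagram_cells (n : ℕ) : (rowDiagram n).cells = {0} ×ˢ range n := by
  ext c
  rw [mem_rowDiagram, mem_product, mem_singleton, mem_range]

lemma card_rowDiagram (n : ℕ) : (rowDiagram n).card = n := by
  simp [YoungDiagram.card, rowDiagram_cells]

lemma eq_rowDiagram_card_of_forall_fst_eq_zero {μ : YoungDiagram}
    (h : ∀ c ∈ μ.cells, c.1 = 0) : μ = rowDiagram μ.card := by
  refine YoungDiagram.ext (eq_of_subset_of_card_le (fun c hc => ?_) ?_)
  · exact mem_rowDiagram.mpr ⟨h c hc, YoungDiagram.snd_lt_card hc⟩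
  · exact (card_rowDiagram μ.card).le

lemma diagS_eq_sub (s : Finset (ℕ × ℕ)) :
    diagS s = ∑ c ∈ s, (c.2 : ℤ) - ∑ c ∈ s, (c.1 : ℤ) :=
  sum_sub_distrib _ _

lemma eigS_rowDiagram_bot (n : ℕ) : eigS (rowDiagram n) ⊥ = (n : ℤ) ^ 2 := by
  rw [eigS, card_rowDiagram, diagS, YoungDiagram.cells_bot, sdiff_empty, rowDiagram_cells,
    sum_product, sum_singleton]
  norm_num [YoungDiagram.card]
  rw [← Nat.cast_sum, ← Nat.cast_add, choose_two_succ_add_sum_range, Nat.cast_pow]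

variable {l m : YoungDiagram}

lemma IsHorizontalStrip.two_mul_sum_snd_le (hs : IsHorizontalStrip l m) :
    2 * ∑ c ∈ l.cells \ m.cells, (c.2 : ℤ) ≤
      #(l.cells \ m.cells) * (2 * l.card - #(l.cells \ m.cells) - 1) := by
  have hinj : Set.InjOn Prod.snd ↑(l.cells \ m.cells) := fun c₁ h₁ c₂ h₂ => hs c₁ h₁ c₂ h₂
  have hcols : (l.cells \ m.cells).image Prod.snd ⊆ range l.card := fun j hj => by
    obtain ⟨c, hc, rfl⟩ := mem_image.mp hj
    exact mem_range.mpr (YoungDiagram.snd_lt_card (mem_sdiff.mp hc).1)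
  have h := two_mul_sum_le_of_subset_range hcols
  rwa [sum_image hinj, card_image_of_injOn hinj] at h

lemma eigS_add_sq_add_sum_fst_le (hml : m ≤ l) (hs : IsHorizontalStrip l m) :
    eigS l m + (m.card : ℤ) ^ 2 + ∑ c ∈ l.cells \ m.cells, (c.1 : ℤ) ≤ (l.card : ℤ) ^ 2 := by
  have hsub : m.cells ⊆ l.cells := YoungDiagram.cells_subset_iff.mpr hml
  have hcard : (#(l.cells \ m.cells) : ℤ) = l.card - m.card := by
    rw [card_sdiff_of_subset hsub, Nat.cast_sub (card_le_card hsub)]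
  have hcols := hs.two_mul_sum_snd_le
  rw [hcard] at hcols
  have hl := two_mul_choose_two_succ l.card
  have hm := two_mul_choose_two_succ m.card
  rw [eigS, diagS_eq_sub]
  linarith

/-- For a horizontal strip `λ/μ` with `|λ| = n`, we have `eig(λ/μ) ≤ n²`,
with equality iff `λ` is the one-row partition `(n)` and `μ` is empty. -/
theorem eig_le_sq (n : ℕ) (l m : YoungDiagram) (hml : m ≤ l) (hn : l.card = n)
    (hs : IsHorizontalStrip l m) :
    eigS l m ≤ (n : ℤ) ^ 2 ∧
      (eigS l m = (n : ℤ) ^ 2 ↔ l = rowDiagram n ∧ m = ⊥) := by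
  have hkey := eigS_add_sq_add_sum_fst_le hml hs
  rw [hn] at hkey
  have hfst : 0 ≤ ∑ c ∈ l.cells \ m.cells, (c.1 : ℤ) := by positivity
  refine ⟨by linarith [sq_nonneg (m.card : ℤ)], fun heq => ?_, ?_⟩
  · obtain ⟨hm, hfst0⟩ := (add_eq_zero_iff_of_nonneg (sq_nonneg (m.card : ℤ)) hfst).mp
      (le_antisymm (by linarith) (by positivity))
    obtain rfl : m = ⊥ := YoungDiagram.ext (by simpa [YoungDiagram.cells_bot] using hm)
    rw [YoungDiagram.cells_bot, sdiff_empty,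
      sum_eq_zero_iff_of_nonneg fun _ _ => Int.natCast_nonneg _] at hfst0
    refine ⟨?_, rfl⟩
    rw [← hn]
    exact eq_rowDiagram_card_of_forall_fst_eq_zero fun c hc => by exact_mod_cast hfst0 c hc
  · rintro ⟨rfl, rfl⟩
    exact eigS_rowDiagram_bot n
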